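/- Let H be a finite p-group of exponent p (every nontrivial element of H has order p) and let x ∈ H with x not in the center Z(H). Then N_H(⟨x⟩) = P_H(⟨x⟩), and ⟨x⟩ is not permutable in H. -/

import Mathlib

open Subgroup
open scoped Pointwise MatrixGroups

/-- `H` is ℙ-subnormal in `G`: there is a chain of subgroups from `H` to `G`
in which each successive index is a prime or `1`. -/
def IsPSubnormal {G : Type*} [Group G] (H : Subgroup G) : Prop :=
  ∃ (n : ℕ) (c : ℕ → Subgroup G),
    c 0 = H ∧ c n = ⊤ ∧
    ∀ i < n, c i ≤ c (i + 1) ∧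
      (((c i).relIndex (c (i + 1))).Prime ∨ (c i).relIndex (c (i + 1)) = 1)

/-- The permutizer `P_G(H)`: the subgroup generated by all `x ∈ G` whose cyclic
subgroup permutes with `H`. -/
def permutizer {G : Type*} [Group G] (H : Subgroup G) : Subgroup G :=
  Subgroup.closure
    {x : G | (Subgroup.zpowers x : Set G) * (H : Set G)
           = (H : Set G) * (Subgroup.zpowers x : Set G)}

/-- `H` is permutable in `G` if `P_G(H) = G`. -/
def IsPermutable {G : Type*} [Group G] (H : Subgroup G) : Prop :=
  permutizer H = ⊤

/-- `H` is strongly permutable in `G` if `P_U(H) = U` for every `H ≤ U ≤ G`. -/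
def IsStronglyPermutable {G : Type*} [Group G] (H : Subgroup G) : Prop :=
  ∀ U : Subgroup G, H ≤ U → permutizer (H.subgroupOf U) = ⊤

/-- A group is supersoluble if it has a normal series all of whose factors are cyclic. -/
def IsSupersoluble (G : Type*) [Group G] : Prop :=
  ∃ (n : ℕ) (c : ℕ → Subgroup G) (hnorm : ∀ i, (c i).Normal),
    c 0 = ⊥ ∧ c n = ⊤ ∧
    ∀ i < n, c i ≤ c (i + 1) ∧
      (letI := hnorm i
       IsCyclic ((c (i + 1)).map (QuotientGroup.mk' (c i))))

/-- A Schmidt group: a non-nilpotent group all of whose proper subgroups are nilpotent. -/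
def IsSchmidt (G : Type*) [Group G] : Prop :=
  ¬ Group.IsNilpotent G ∧ ∀ H : Subgroup G, H ≠ ⊤ → Group.IsNilpotent H

/-! If `⟨y⟩` permutes with `⟨x⟩` in a group of exponent `p`, then `⟨x⟩⟨y⟩` is a subgroup of
order at most `p ^ 2`, hence abelian, so `y` centralizes `x`. Thus
`N(⟨x⟩) ≤ P(⟨x⟩) ≤ C(x) ≤ N(⟨x⟩)`, and `C(x)` is proper because `x` is not central. -/

namespace Subgroup

variable {G : Type*} [Group G]

theorem normalizer_le_permutizer (K : Subgroup G) : normalizer (K : Set G) ≤ permutizer K :=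
  fun _ hy => subset_closure <| set_mul_normalizer_comm _ K (zpowers_le.mpr hy)

theorem coe_sup_of_mul_comm {A B : Subgroup G} (h : (A : Set G) * B = B * A) :
    ((A ⊔ B : Subgroup G) : Set G) = A * B := by
  let AB : Subgroup G :=
    { carrier := A * B
      one_mem' := ⟨1, A.one_mem, 1, B.one_mem, mul_one 1⟩
      mul_mem' := fun ha hb => by
        have hmul : ((A : Set G) * B) * (A * B) = A * B := by
          calc ((A : Set G) * B) * (A * B) = A * (B * A) * B := by simp only [mul_assoc]
            _ = (A * A) * (B * B) := by rw [← h]; simp only [mul_assoc]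
            _ = A * B := by rw [coe_mul_coe, coe_mul_coe]
        exact hmul ▸ Set.mul_mem_mul ha hb
      inv_mem' := fun ha => by
        have hinv : ((A : Set G) * B)⁻¹ = A * B := by
          rw [mul_inv_rev, inv_coe_set, inv_coe_set, h]
        exact hinv ▸ Set.inv_mem_inv.mpr ha }
  refine le_antisymm (?_ : A ⊔ B ≤ AB) (Set.mul_subset_iff.mpr fun _ ha _ hb => mul_mem_sup ha hb)
  exact sup_le (fun a ha => ⟨a, ha, 1, B.one_mem, mul_one a⟩)
    fun b hb => ⟨1, A.one_mem, b, hb, one_mul b⟩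

end Subgroup

theorem IsPGroup.isMulCommutative_of_card_le_prime_sq {G : Type*} [Group G] [Finite G] {p : ℕ}
    [hp : Fact p.Prime] (hG : IsPGroup p G) (hcard : Nat.card G ≤ p ^ 2) :
    IsMulCommutative G := by
  obtain ⟨n, hn⟩ := IsPGroup.iff_card.mp hG
  have hn2 : n ≤ 2 := (Nat.pow_le_pow_iff_right hp.out.one_lt).mp (hn ▸ hcard)
  rcases hn2.lt_or_eq with hn1 | rfl
  · have : IsCyclic G :=
      isCyclic_of_card_dvd_prime (hn ▸ (pow_one p ▸ pow_dvd_pow p (Nat.lt_succ_iff.mp hn1)))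
    infer_instance
  · exact IsPGroup.isMulCommutative_of_card_eq_prime_sq hn

section ExponentPrime

variable {G : Type*} [Group G] {p : ℕ} [hp : Fact p.Prime]

open Subgroup

theorem commute_of_zpowers_mul_comm (hG : ∀ g : G, g ^ p = 1) {x y : G}
    (h : (zpowers y : Set G) * zpowers x = zpowers x * zpowers y) : Commute x y := by
  have hfin (g : G) : IsOfFinOrder g := isOfFinOrder_iff_pow_eq_one.mpr ⟨p, hp.out.pos, hG g⟩
  have hcard (g : G) : Nat.card (zpowers g) ≤ p :=
    Nat.card_zpowers g ▸ orderOf_le_of_pow_eq_one hp.out.pos (hG g)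
  set K := zpowers x ⊔ zpowers y
  have hK : (K : Set G) = zpowers x * zpowers y := coe_sup_of_mul_comm h.symm
  have : Finite K := by
    change Finite (K : Set G)
    rw [hK]
    exact ((hfin x).finite_zpowers.mul (hfin y).finite_zpowers).to_subtype
  have hKcard : Nat.card K ≤ p ^ 2 :=
    calc Nat.card K = Nat.card ((zpowers x : Set G) * zpowers y : Set G) := by rw [← hK]; rfl
      _ ≤ Nat.card (zpowers x) * Nat.card (zpowers y) := Set.natCard_mul_le
      _ ≤ p ^ 2 := sq p ▸ Nat.mul_le_mul (hcard x) (hcard y)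
  have hKp : IsPGroup p K := fun g => ⟨1, Subtype.ext (by simpa using hG g)⟩
  have := hKp.isMulCommutative_of_card_le_prime_sq hKcard
  exact congrArg Subtype.val <| this.is_comm.comm
    ⟨x, mem_sup_left (mem_zpowers x)⟩ ⟨y, mem_sup_right (mem_zpowers y)⟩

theorem permutizer_zpowers_le_centralizer (hG : ∀ g : G, g ^ p = 1) (x : G) :
    permutizer (zpowers x) ≤ centralizer {x} :=
  (closure_le _).mpr fun _ hy => mem_centralizer_singleton_iff.mpr
    (commute_of_zpowers_mul_comm hG hy).eq.symm

end ExponentPrime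

theorem statement_19_general {H : Type*} [Group H]
    {p : ℕ} (hp : p.Prime) (hexp : ∀ h : H, h ≠ 1 → orderOf h = p)
    {x : H} (hx : x ∉ Subgroup.center H) :
    Subgroup.normalizer ((Subgroup.zpowers x : Subgroup H) : Set H) = permutizer (Subgroup.zpowers x) ∧
      ¬ IsPermutable (Subgroup.zpowers x) := by
  have : Fact p.Prime := ⟨hp⟩
  have hG (g : H) : g ^ p = 1 := by
    by_cases hg : g = 1
    · rw [hg, one_pow]
    · exact hexp g hg ▸ pow_orderOf_eq_one g
  have hP := permutizer_zpowers_le_centralizer hG x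
  have hC : centralizer {x} ≤ normalizer (zpowers x : Set H) := by
    rw [← centralizer_closure, ← zpowers_eq_closure]
    exact centralizer_le_normalizer _
  refine ⟨(normalizer_le_permutizer _).antisymm (hP.trans hC), fun hperm => hx ?_⟩
  have hcent : centralizer {x} = ⊤ := top_unique (hperm ▸ hP)
  exact centralizer_eq_top_iff_subset.mp hcent rfl

/-- Let `H` be a finite `p`-group of exponent `p` (every nontrivial element has order
`p`) and let `x ∈ H` with `x ∉ Z(H)`. Then `N_H(⟨x⟩) = P_H(⟨x⟩)` and `⟨x⟩` is not
permutable in `H`. -/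
theorem statement_19 {H : Type*} [Group H] [Finite H]
    {p : ℕ} (hp : p.Prime) (hexp : ∀ h : H, h ≠ 1 → orderOf h = p)
    {x : H} (hx : x ∉ Subgroup.center H) :
    Subgroup.normalizer ((Subgroup.zpowers x : Subgroup H) : Set H) = permutizer (Subgroup.zpowers x) ∧
      ¬ IsPermutable (Subgroup.zpowers x) :=
  statement_19_general hp hexp hx
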